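/- arXiv:1109.0818 — 4 statements merged into one kernel-verified Lean document; each statement's English description precedes it below -/
import Mathlib

section
/- For the state Φ = √((1−d)/2)|01⟩ + √((1+d)/2)|10⟩ with d = √(1−c²), c ∈ [0,1], the Wootters concurrence of ω_Φ equals c; hence the total correlation of ω_Φ with respect to the canonical Bell pair (𝒜₀, ℬ₀) equals its concurrence. -/
open Matrix Kronecker ComplexOrder

noncomputable def σp : Fin 3 → Matrix (Fin 2) (Fin 2) ℂ
  | 0 => !![0, 1; 1, 0]
  | 1 => !![0, -Complex.I; Complex.I, 0]
  | 2 => !![1, 0; 0, -1]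

noncomputable def kr (A B : Matrix (Fin 2) (Fin 2) ℂ) : Matrix (Fin 4) (Fin 4) ℂ :=
  Matrix.reindex finProdFinEquiv finProdFinEquiv (A ⊗ₖ B)

noncomputable def lam : ℕ → Matrix (Fin 4) (Fin 4) ℂ
  | 1 => kr 1 (σp 0)
  | 2 => kr 1 (σp 1)
  | 3 => kr 1 (σp 2)
  | 4 => kr (σp 0) 1
  | 5 => kr (σp 1) 1
  | 6 => kr (σp 2) 1
  | 7 => kr (σp 0) (σp 0)
  | 8 => kr (σp 0) (σp 1)
  | 9 => kr (σp 0) (σp 2)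
  | 10 => kr (σp 1) (σp 0)
  | 11 => kr (σp 1) (σp 1)
  | 12 => kr (σp 1) (σp 2)
  | 13 => kr (σp 2) (σp 0)
  | 14 => kr (σp 2) (σp 1)
  | 15 => kr (σp 2) (σp 2)
  | _ => 0

noncomputable def vecState (Ψ : Fin 4 → ℂ) (X : Matrix (Fin 4) (Fin 4) ℂ) : ℂ :=
  star Ψ ⬝ᵥ (X *ᵥ Ψ)

noncomputable def opNorm (Q : Matrix (Fin 3) (Fin 3) ℝ) : ℝ :=
  ‖(Matrix.toEuclideanLin Q).toContinuousLinearMap‖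

noncomputable def corrMat (ω : Matrix (Fin 4) (Fin 4) ℂ → ℂ)
    (A B : Fin 3 → Matrix (Fin 4) (Fin 4) ℂ) : Matrix (Fin 3) (Fin 3) ℝ :=
  Matrix.of fun i j => (ω (A i * B j) - ω (A i) * ω (B j)).re

/-- The primed Bell pair generators `A'₁, A'₂, A'₃`. -/
noncomputable def Ap : Fin 3 → Matrix (Fin 4) (Fin 4) ℂ
  | 0 => -((1 / 2 : ℂ) • (lam 3 - lam 6 - lam 7 + lam 11))
  | 1 => -lam 10
  | 2 => -((1 / 2 : ℂ) • (lam 3 + lam 6 - lam 7 - lam 11))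

/-- The primed Bell pair generators `B'₁, B'₂, B'₃`. -/
noncomputable def Bp : Fin 3 → Matrix (Fin 4) (Fin 4) ℂ
  | 0 => ((Real.sqrt 2 : ℂ))⁻¹ • (lam 1 - lam 9)
  | 1 => -((Real.sqrt 2 : ℂ))⁻¹ • (lam 5 - lam 14)
  | 2 => lam 15

/-- The non-canonical Bell pair generators `A₁, A₂, A₃` of Eq. (17). -/
noncomputable def An : Fin 3 → Matrix (Fin 4) (Fin 4) ℂ
  | 0 => ((Real.sqrt 2 : ℂ))⁻¹ • (lam 4 + lam 11)
  | 1 => ((Real.sqrt 2 : ℂ))⁻¹ • (lam 10 - lam 12)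
  | 2 => -((1 / 2 : ℂ) • (lam 1 + lam 3 - lam 13 + lam 15))

/-- The non-canonical Bell pair generators `B₁, B₂, B₃` of Eq. (17). -/
noncomputable def Bn : Fin 3 → Matrix (Fin 4) (Fin 4) ℂ
  | 0 => ((Real.sqrt 2 : ℂ))⁻¹ • (lam 7 + lam 9)
  | 1 => -((Real.sqrt 2 : ℂ))⁻¹ • (lam 5 + lam 8)
  | 2 => (1 / 2 : ℂ) • (lam 1 - lam 3 - lam 13 - lam 15)

/-! Write Φ = a|01⟩ + b|10⟩ with a, b ≥ 0, a² + b² = 1 and 2ab = c, so the concurrence is 2ab = c.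
For this state the local expectations of σ_x and σ_y vanish and ⟨σ_z ⊗ 1⟩ = -⟨1 ⊗ σ_z⟩ = a² - b²,
so the correlation matrix is diag(2ab, 2ab, (a² - b²)² - 1) = diag(c, c, -c²), whose operator norm
is its largest absolute entry, c. -/

lemma kr_mul_kr (A B C D : Matrix (Fin 2) (Fin 2) ℂ) : kr A B * kr C D = kr (A * C) (B * D) := by
  simp only [kr, reindex_apply, submatrix_mul_equiv, ← mul_kronecker_mul]

lemma vecState_kr (a b : ℝ) (A B : Matrix (Fin 2) (Fin 2) ℂ) :
    vecState ![0, (a : ℂ), (b : ℂ), 0] (kr A B) =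
      a ^ 2 * (A 0 0 * B 1 1) + a * b * (A 0 1 * B 1 0 + A 1 0 * B 0 1) + b ^ 2 * (A 1 1 * B 0 0) := by
  simp only [vecState, dotProduct, Pi.star_apply, RCLike.star_def, mulVec, kr, Nat.reduceMul,
    finProdFinEquiv, Fin.divNat, Fin.modNat, reindex_apply, Equiv.symm_mk, Equiv.coe_fn_mk,
    submatrix_apply, kroneckerMap_apply, Fin.sum_univ_four, Fin.isValue, Fin.coe_ofNat_eq_mod,
    Nat.zero_mod, Nat.zero_div, Fin.zero_eta, cons_val_zero, mul_zero, Nat.one_mod, Nat.reduceDiv,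
    Nat.mod_succ, Fin.mk_one, cons_val_one, zero_add, Nat.reduceMod, Order.lt_two_iff, zero_le,
    Nat.div_self, Nat.mod_self, cons_val, add_zero, map_zero, zero_mul, Complex.conj_ofReal]
  ring

lemma corrMat_vecState_antidiag (a b : ℝ) (hab : a ^ 2 + b ^ 2 = 1) :
    corrMat (vecState ![0, (a : ℂ), (b : ℂ), 0]) (fun i => kr 1 (σp i)) (fun j => kr (σp j) 1) =
      diagonal ![2 * a * b, 2 * a * b, -(2 * a * b) ^ 2] := by
  ext i j
  simp only [corrMat, of_apply, kr_mul_kr, one_mul, mul_one, vecState_kr]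
  fin_cases i <;> fin_cases j <;> simp [σp, ← Complex.ofReal_pow]
  · ring
  · ring
  · linear_combination (a ^ 2 + b ^ 2) * hab

open scoped Matrix.Norms.L2Operator in
lemma opNorm_diagonal (v : Fin 3 → ℝ) : opNorm (diagonal v) = ‖v‖ :=
  l2_opNorm_diagonal v

lemma norm_vec_self_self_neg_sq {c : ℝ} (hc0 : 0 ≤ c) (hc1 : c ≤ 1) : ‖![c, c, -c ^ 2]‖ = c := by
  refine le_antisymm ((pi_norm_le_iff_of_nonneg hc0).mpr fun i => ?_) ?_
  · fin_cases i <;> simp [abs_of_nonneg hc0]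
    nlinarith
  · simpa [abs_of_nonneg hc0] using norm_le_pi_norm ![c, c, -c ^ 2] 0

lemma sqrt_half_one_sub_sq_add_sqrt_half_one_add_sq {d : ℝ} (hd₀ : -1 ≤ d) (hd₁ : d ≤ 1) :
    √((1 - d) / 2) ^ 2 + √((1 + d) / 2) ^ 2 = 1 := by
  rw [Real.sq_sqrt (by linarith), Real.sq_sqrt (by linarith)]
  ring

lemma two_mul_sqrt_half_one_sub_mul_sqrt_half_one_add {c : ℝ} (hc0 : 0 ≤ c) (hc1 : c ≤ 1) :
    2 * √((1 - √(1 - c ^ 2)) / 2) * √((1 + √(1 - c ^ 2)) / 2) = c := by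
  have hprod : (1 - √(1 - c ^ 2)) / 2 * ((1 + √(1 - c ^ 2)) / 2) = (c / 2) ^ 2 := by
    linear_combination (-1 / 4 : ℝ) * Real.sq_sqrt (show 0 ≤ 1 - c ^ 2 by nlinarith)
  rw [mul_assoc, ← Real.sqrt_mul' _ (by positivity), hprod, Real.sqrt_sq (by positivity)]
  ring

theorem stmt_4 (c : ℝ) (hc : c ∈ Set.Icc (0:ℝ) 1) (d : ℝ) (hd : d = Real.sqrt (1 - c ^ 2))
    (Φ : Fin 4 → ℂ)
    (hΦ : Φ = ![0, ((Real.sqrt ((1 - d) / 2) : ℝ) : ℂ), ((Real.sqrt ((1 + d) / 2) : ℝ) : ℂ), 0]) :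
    2 * ‖Φ 0 * Φ 3 - Φ 1 * Φ 2‖ = c ∧
    opNorm (corrMat (vecState Φ) (fun i => kr 1 (σp i)) (fun j => kr (σp j) 1)) =
      2 * ‖Φ 0 * Φ 3 - Φ 1 * Φ 2‖ := by
  obtain ⟨hc0, hc1⟩ := hc
  have hd₀ : 0 ≤ d := hd ▸ Real.sqrt_nonneg _
  have hd₁ : d ≤ 1 := hd ▸ Real.sqrt_le_one.mpr (by nlinarith)
  have hab : 2 * √((1 - d) / 2) * √((1 + d) / 2) = c :=
    hd ▸ two_mul_sqrt_half_one_sub_mul_sqrt_half_one_add hc0 hc1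
  have hconcurrence : 2 * ‖Φ 0 * Φ 3 - Φ 1 * Φ 2‖ = c := by
    simp [hΦ, ← hab, mul_assoc, abs_of_nonneg, Real.sqrt_nonneg]
  refine ⟨hconcurrence, ?_⟩
  rw [hconcurrence, hΦ, corrMat_vecState_antidiag _ _
    (sqrt_half_one_sub_sq_add_sqrt_half_one_add_sq (by linarith) hd₁),
    hab, opNorm_diagonal, norm_vec_self_self_neg_sq hc0 hc1]
end

section
/- The state Ψ = ½(e₁ + e₂ + i e₃ − i e₄) (i.e. Ψ_{a,φ,ϑ} with a = 1/√2, φ = 0, ϑ = π/2) has total correlation 1 both with respect to the canonical Bell pair (𝒜₀, ℬ₀) and with respect to the Bell pair (𝒜', ℬ') defined via λ-generators; i.e., it is maximally entangled for both partitions. -/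
open Matrix Kronecker ComplexOrder

/-!
For a Hermitian `A` one has `ω(A B) = ⟨A Ψ, B Ψ⟩`, so each correlation matrix is read off the six
vectors `Aᵢ Ψ` and `Bⱼ Ψ`. All single expectations vanish, the `Bⱼ Ψ` are orthonormal for the real
part of the inner product, and `Aᵢ Ψ = ∑ⱼ Qᵢⱼ Bⱼ Ψ` with `Q` orthogonal: a signed permutation for
the canonical pair, a rotation by `π/4` composed with a permutation for the primed pair. So the
correlation matrix is `Q`, which is unitary in the C⋆-algebra of real `3 × 3` matrices with the
`ℓ²` operator norm and therefore has norm `1`.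
-/

lemma isHermitian_σp (i : Fin 3) : (σp i).IsHermitian := by
  fin_cases i <;> ext a b <;> fin_cases a <;> fin_cases b <;> simp [σp]

lemma isHermitian_kr {A B : Matrix (Fin 2) (Fin 2) ℂ} (hA : A.IsHermitian) (hB : B.IsHermitian) :
    (kr A B).IsHermitian :=
  IsHermitian.reindex (by rw [IsHermitian, conjTranspose_kronecker, hA, hB]) _

lemma isHermitian_lam : ∀ n, (lam n).IsHermitian
  | 1 | 2 | 3 => isHermitian_kr isHermitian_one (isHermitian_σp _)
  | 4 | 5 | 6 => isHermitian_kr (isHermitian_σp _) isHermitian_one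
  | 7 | 8 | 9 | 10 | 11 | 12 | 13 | 14 | 15 => isHermitian_kr (isHermitian_σp _) (isHermitian_σp _)
  | 0 | _ + 16 => isHermitian_zero

lemma isHermitian_Ap (i : Fin 3) : (Ap i).IsHermitian := by
  have hhalf : IsSelfAdjoint (1 / 2 : ℂ) := by simp [IsSelfAdjoint]
  have h := isHermitian_lam
  fin_cases i
  · exact (((((h 3).sub (h 6)).sub (h 7)).add (h 11)).smul hhalf).neg
  · exact (h 10).neg
  · exact (((((h 3).add (h 6)).sub (h 7)).sub (h 11)).smul hhalf).neg

lemma vecState_mul_of_isHermitian (Ψ : Fin 4 → ℂ) {A : Matrix (Fin 4) (Fin 4) ℂ}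
    (hA : A.IsHermitian) (B : Matrix (Fin 4) (Fin 4) ℂ) :
    vecState Ψ (A * B) = star (A *ᵥ Ψ) ⬝ᵥ (B *ᵥ Ψ) := by
  rw [vecState, ← mulVec_mulVec, dotProduct_mulVec, star_mulVec, hA.eq]

lemma corrMat_vecState_eq {Ψ : Fin 4 → ℂ} {A B : Fin 3 → Matrix (Fin 4) (Fin 4) ℂ}
    {a b : Fin 3 → Fin 4 → ℂ} (hA : ∀ i, (A i).IsHermitian)
    (ha : ∀ i, A i *ᵥ Ψ = a i) (hb : ∀ j, B j *ᵥ Ψ = b j) :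
    corrMat (vecState Ψ) A B =
      of fun i j => (star (a i) ⬝ᵥ b j - (star Ψ ⬝ᵥ a i) * (star Ψ ⬝ᵥ b j)).re := by
  ext i j
  rw [corrMat, of_apply, of_apply, vecState_mul_of_isHermitian Ψ (hA i), vecState, vecState,
    ha, hb]

lemma kr_mulVec (A B : Matrix (Fin 2) (Fin 2) ℂ) (v : Fin 4 → ℂ) :
    kr A B *ᵥ v = ![A 0 0 * (B 0 0 * v 0 + B 0 1 * v 1) + A 0 1 * (B 0 0 * v 2 + B 0 1 * v 3),
      A 0 0 * (B 1 0 * v 0 + B 1 1 * v 1) + A 0 1 * (B 1 0 * v 2 + B 1 1 * v 3),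
      A 1 0 * (B 0 0 * v 0 + B 0 1 * v 1) + A 1 1 * (B 0 0 * v 2 + B 0 1 * v 3),
      A 1 0 * (B 1 0 * v 0 + B 1 1 * v 1) + A 1 1 * (B 1 0 * v 2 + B 1 1 * v 3)] := by
  ext k
  fin_cases k <;>
    simp [kr, mulVec, dotProduct, Fin.sum_univ_four, finProdFinEquiv, Fin.divNat, Fin.modNat] <;>
    ring

noncomputable def psi : Fin 4 → ℂ := ![1 / 2, 1 / 2, Complex.I / 2, -Complex.I / 2]

section Vectors

open Complex

lemma kr_one_σp_mulVec_psi :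
    (fun i => kr 1 (σp i) *ᵥ psi) =
      ![(1 / 2 : ℂ) • ![1, 1, -I, I], (1 / 2 : ℂ) • ![-I, I, -1, -1],
        (1 / 2 : ℂ) • ![1, -1, I, I]] := by
  ext i k
  fin_cases i <;> fin_cases k <;> simp [kr_mulVec, σp, psi] <;> grind [I_sq]

lemma kr_σp_one_mulVec_psi :
    (fun j => kr (σp j) 1 *ᵥ psi) =
      ![(1 / 2 : ℂ) • ![I, -I, 1, 1], (1 / 2 : ℂ) • ![1, -1, I, I],
        (1 / 2 : ℂ) • ![1, 1, -I, I]] := by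
  ext j k
  fin_cases j <;> fin_cases k <;> simp [kr_mulVec, σp, psi] <;> grind [I_sq]

lemma Ap_mulVec_psi :
    (fun i => Ap i *ᵥ psi) =
      ![(1 / 2 : ℂ) • ![-I, 1, -I, 1], (1 / 2 : ℂ) • ![1, -1, -I, -I],
        (1 / 2 : ℂ) • ![-1, I, 1, -I]] := by
  ext i k
  fin_cases i <;> fin_cases k <;>
    simp [Ap, lam, sub_mulVec, add_mulVec, smul_mulVec, neg_mulVec, kr_mulVec, σp, psi] <;>
    grind [I_sq]

lemma Bp_mulVec_psi :
    (fun j => Bp j *ᵥ psi) =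
      ![(√2 : ℂ)⁻¹ • (1 / 2 : ℂ) • ![1 - I, 1 - I, -1 - I, 1 + I],
        (√2 : ℂ)⁻¹ • (1 / 2 : ℂ) • ![-1 - I, 1 + I, 1 - I, 1 - I],
        (1 / 2 : ℂ) • ![1, -1, -I, -I]] := by
  ext j k
  fin_cases j <;> fin_cases k <;>
    simp [Bp, lam, sub_mulVec, smul_mulVec, neg_mulVec, kr_mulVec, σp, psi] <;>
    grind [I_sq]

end Vectors

lemma corrMat_psi_kr :
    corrMat (vecState psi) (fun i => kr 1 (σp i)) (fun j => kr (σp j) 1) =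
      !![0, 0, 1; -1, 0, 0; 0, 1, 0] := by
  rw [corrMat_vecState_eq (fun i => isHermitian_kr isHermitian_one (isHermitian_σp i))
    (congrFun kr_one_σp_mulVec_psi) (congrFun kr_σp_one_mulVec_psi)]
  ext i j
  fin_cases i <;> fin_cases j <;>
    simp [dotProduct, Fin.sum_univ_four, psi, Complex.conj_ofNat] <;> norm_num

lemma corrMat_psi_Ap_Bp :
    corrMat (vecState psi) Ap Bp = !![√2 / 2, √2 / 2, 0; 0, 0, 1; -(√2 / 2), √2 / 2, 0] := by
  rw [corrMat_vecState_eq isHermitian_Ap (congrFun Ap_mulVec_psi) (congrFun Bp_mulVec_psi)]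
  ext i j
  fin_cases i <;> fin_cases j <;>
    simp [dotProduct, Fin.sum_univ_four, psi, Complex.conj_ofNat] <;> norm_num <;> ring

lemma corrMat_psi_kr_mul_transpose :
    corrMat (vecState psi) (fun i => kr 1 (σp i)) (fun j => kr (σp j) 1) *
      (corrMat (vecState psi) (fun i => kr 1 (σp i)) (fun j => kr (σp j) 1))ᵀ = 1 := by
  rw [corrMat_psi_kr]
  ext i j
  fin_cases i <;> fin_cases j <;> simp [mul_apply, Fin.sum_univ_three]

lemma corrMat_psi_Ap_Bp_mul_transpose :
    corrMat (vecState psi) Ap Bp * (corrMat (vecState psi) Ap Bp)ᵀ = 1 := by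
  have h : √2 / 2 * (√2 / 2) = 1 / 2 := by ring_nf; norm_num
  rw [corrMat_psi_Ap_Bp]
  ext i j
  fin_cases i <;> fin_cases j <;> simp [mul_apply, Fin.sum_univ_three, h] <;> norm_num

lemma opNorm_eq_one_of_mul_transpose_eq_one {Q : Matrix (Fin 3) (Fin 3) ℝ} (hQ : Q * Qᵀ = 1) :
    opNorm Q = 1 := by
  open scoped Matrix.Norms.L2Operator in
  have hU : Q ∈ unitaryGroup (Fin 3) ℝ := by
    rw [mem_unitaryGroup_iff, star_eq_conjTranspose, conjTranspose_eq_transpose_of_trivial, hQ]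
  exact CStarRing.norm_of_mem_unitary (E := Matrix (Fin 3) (Fin 3) ℝ) hU

theorem stmt_10 (Ψ : Fin 4 → ℂ)
    (hΨ : Ψ = ![1 / 2, 1 / 2, Complex.I / 2, -Complex.I / 2]) :
    opNorm (corrMat (vecState Ψ) (fun i => kr 1 (σp i)) (fun j => kr (σp j) 1)) = 1 ∧
    opNorm (corrMat (vecState Ψ) Ap Bp) = 1 := by
  obtain rfl : Ψ = psi := hΨ
  exact ⟨opNorm_eq_one_of_mul_transpose_eq_one corrMat_psi_kr_mul_transpose,
    opNorm_eq_one_of_mul_transpose_eq_one corrMat_psi_Ap_Bp_mul_transpose⟩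
end

section
/- Let (𝒜, ℬ) be a Bell pair with Pauli-type generators and ω_Ψ a pure two-qubit vector state. If the restriction vectors r = (ω(A₁),ω(A₂),ω(A₃)) and s = (ω(B₁),ω(B₂),ω(B₃)) satisfy ‖r‖ = ‖s‖ = 1, then ω_Ψ is (𝒜,ℬ)-separable, i.e. ω_Ψ(AB) = ω_Ψ(A)ω_Ψ(B) for all A ∈ 𝒜, B ∈ ℬ. -/
/-!
Write `r · A = ∑ rᵢ Aᵢ`. Since the `Aᵢ` are anticommuting hermitian involutions and `‖r‖ = 1`,
`r · A` is again a hermitian involution, and its expectation in `Ψ` is `‖r‖² = 1`; hence it fixes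
`Ψ`, i.e. `Ψ` lies in the range of the projection `P = (1 + r · A) / 2`, which commutes with `ℬ`.
The product `A₁A₂A₃` commutes with every generator of the full matrix algebra, so it is a scalar;
therefore `𝒜 = span {1, A₁, A₂, A₃}`, and `P X P = ω(X) P` for every `X ∈ 𝒜` because
`P Aᵢ P = rᵢ P`. For `Y ∈ ℬ`, `ω(XY) = ⟨PΨ, X Y PΨ⟩ = ⟨Ψ, (P X P) Y Ψ⟩ = ω(X) ω(Y)`.
-/

open Matrix Kronecker ComplexOrder

section Clifford

variable {ι K R : Type*} [Fintype ι] [Field K] [Ring R] [Algebra K R]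

theorem sum_smul_mul_add_mul_sum_smul {A : ι → R} (hA2 : ∀ i, A i * A i = 1)
    (hanti : ∀ i j, i ≠ j → A i * A j + A j * A i = 0) (x : ι → K) (k : ι) :
    (∑ i, x i • A i) * A k + A k * ∑ i, x i • A i = (2 * x k) • 1 := by
  simp only [Finset.sum_mul, Finset.mul_sum, ← Finset.sum_add_distrib, smul_mul_assoc,
    mul_smul_comm, ← smul_add]
  rw [Finset.sum_eq_single k (fun i _ hik => by rw [hanti i k hik, smul_zero]) (by simp),
    hA2, ← two_smul K (1 : R), smul_smul, mul_comm]

theorem sum_smul_mul_self [NeZero (2 : K)] {A : ι → R} (hA2 : ∀ i, A i * A i = 1)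
    (hanti : ∀ i j, i ≠ j → A i * A j + A j * A i = 0) (x : ι → K) :
    (∑ i, x i • A i) * ∑ i, x i • A i = (∑ i, x i ^ 2) • 1 := by
  have hanti_m := sum_smul_mul_add_mul_sum_smul hA2 hanti x
  set m := ∑ i, x i • A i
  have hl : m * m = ∑ k, x k • (m * A k) := by simp only [← mul_smul_comm, ← Finset.mul_sum]; rfl
  have hr : m * m = ∑ k, x k • (A k * m) := by simp only [← smul_mul_assoc, ← Finset.sum_mul]; rfl
  refine smul_right_injective R (two_ne_zero (α := K)) ?_
  calc (2 : K) • (m * m) = ∑ k, x k • (m * A k + A k * m) := by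
        rw [two_smul]
        nth_rewrite 1 [hl]
        rw [hr, ← Finset.sum_add_distrib]
        simp only [smul_add]
    _ = (2 : K) • ((∑ i, x i ^ 2) • 1) := by
        simp only [hanti_m, smul_smul, ← Finset.sum_smul, Finset.mul_sum]
        congr 1
        exact Finset.sum_congr rfl fun i _ => by ring

theorem one_add_sum_smul_mul_mul_one_add_sum_smul [NeZero (2 : K)] {A : ι → R}
    (hA2 : ∀ i, A i * A i = 1) (hanti : ∀ i j, i ≠ j → A i * A j + A j * A i = 0)
    (x : ι → K) (k : ι) :
    (1 + ∑ i, x i • A i) * A k * (1 + ∑ i, x i • A i) =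
      (2 * x k) • (1 + ∑ i, x i • A i) + (1 - ∑ i, x i ^ 2) • A k := by
  have hsq := sum_smul_mul_self hA2 hanti x
  have hanti_m := sum_smul_mul_add_mul_sum_smul hA2 hanti x k
  set m := ∑ i, x i • A i
  calc (1 + m) * A k * (1 + m) = A k + (m * A k + A k * m) + (m * A k) * m := by noncomm_ring
    _ = A k + (2 * x k) • 1 + ((2 * x k) • 1 - A k * m) * m := by
      rw [hanti_m, eq_sub_of_add_eq hanti_m]
    _ = _ := by
      rw [sub_mul, mul_assoc, hsq, smul_mul_assoc, one_mul, mul_smul_comm, mul_one]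
      module

/-- For a unit vector `x`, the projection onto the `+1` eigenspace of the involution
`∑ i, x i • A i`: for Pauli matrices, the pure qubit state with Bloch vector `x`. -/
noncomputable def spinProjection (A : ι → R) (x : ι → K) : R :=
  (2⁻¹ : K) • (1 + ∑ i, x i • A i)

theorem spinProjection_mul_self [NeZero (2 : K)] {A : ι → R} (hA2 : ∀ i, A i * A i = 1)
    (hanti : ∀ i j, i ≠ j → A i * A j + A j * A i = 0) {x : ι → K} (hx : ∑ i, x i ^ 2 = 1) :
    spinProjection A x * spinProjection A x = spinProjection A x := by
  have hm2 := sum_smul_mul_self hA2 hanti x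
  rw [hx, one_smul] at hm2
  rw [spinProjection]
  set m := ∑ i, x i • A i
  have hsq : (1 + m) * (1 + m) = (2 : K) • (1 + m) := calc
    (1 + m) * (1 + m) = 1 + m + m + m * m := by noncomm_ring
    _ = (2 : K) • (1 + m) := by rw [hm2, two_smul]; abel
  rw [smul_mul_smul_comm, hsq, smul_smul, mul_assoc, inv_mul_cancel₀ two_ne_zero, mul_one]

theorem spinProjection_mul_mul_spinProjection [NeZero (2 : K)] {A : ι → R}
    (hA2 : ∀ i, A i * A i = 1) (hanti : ∀ i j, i ≠ j → A i * A j + A j * A i = 0) {x : ι → K}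
    (hx : ∑ i, x i ^ 2 = 1) (k : ι) :
    spinProjection A x * A k * spinProjection A x = x k • spinProjection A x := by
  rw [spinProjection, smul_mul_assoc, smul_mul_assoc, mul_smul_comm,
    one_add_sum_smul_mul_mul_one_add_sum_smul hA2 hanti, hx, sub_self, zero_smul, add_zero,
    smul_smul, smul_smul, smul_smul]
  congr 1
  field_simp

theorem commute_spinProjection {A : ι → R} (x : ι → K) {Y : R} (hY : ∀ i, Commute (A i) Y) :
    Commute (spinProjection A x) Y :=
  ((Commute.one_left Y).add_left (Commute.sum_left _ _ _ fun i _ => (hY i).smul_left _)).smul_left _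

end Clifford

section VectorState

variable {n 𝕜 : Type*} [Fintype n] [RCLike 𝕜]

theorem star_mulVec_dotProduct (Ψ Φ : n → 𝕜) (X : Matrix n n 𝕜) :
    star (X *ᵥ Ψ) ⬝ᵥ Φ = star Ψ ⬝ᵥ (Xᴴ *ᵥ Φ) := by
  rw [star_mulVec, dotProduct_mulVec]

theorem star_dotProduct_mulVec_self (Ψ : n → 𝕜) (X : Matrix n n 𝕜) :
    star (star Ψ ⬝ᵥ (X *ᵥ Ψ)) = star Ψ ⬝ᵥ (Xᴴ *ᵥ Ψ) := by
  rw [← star_dotProduct, star_mulVec_dotProduct]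

theorem sum_sq_eq_one_of_sum_re_sq_eq_one {ι : Type*} [Fintype ι] {x : ι → 𝕜}
    (hx : ∀ i, star (x i) = x i) (h : ∑ i, RCLike.re (x i) ^ 2 = 1) : ∑ i, x i ^ 2 = 1 := calc
  ∑ i, x i ^ 2 = ∑ i, ((RCLike.re (x i) ^ 2 : ℝ) : 𝕜) := Finset.sum_congr rfl fun i _ => by
      rw [RCLike.ofReal_pow, RCLike.conj_eq_iff_re.mp (hx i)]
  _ = 1 := by exact_mod_cast h

theorem mulVec_eq_self_of_dotProduct_mulVec_eq [DecidableEq n] {U : Matrix n n 𝕜} (hU : Uᴴ = U)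
    (hU2 : U * U = 1) {Ψ : n → 𝕜} (h : star Ψ ⬝ᵥ (U *ᵥ Ψ) = star Ψ ⬝ᵥ Ψ) : U *ᵥ Ψ = Ψ := by
  have hnorm : star (U *ᵥ Ψ - Ψ) ⬝ᵥ (U *ᵥ Ψ - Ψ) = 0 := by
    rw [star_sub, sub_dotProduct, dotProduct_sub, dotProduct_sub, star_mulVec_dotProduct,
      star_mulVec_dotProduct, hU, mulVec_mulVec, hU2, one_mulVec, h]
    ring
  exact sub_eq_zero.mp (dotProduct_star_self_eq_zero.mp hnorm)

theorem spinProjection_conjTranspose [DecidableEq n] {ι : Type*} [Fintype ι]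
    {A : ι → Matrix n n 𝕜} (hAherm : ∀ i, (A i)ᴴ = A i) {x : ι → 𝕜} (hx : ∀ i, star (x i) = x i) :
    (spinProjection A x)ᴴ = spinProjection A x := by
  simp [spinProjection, conjTranspose_sum, conjTranspose_smul, hAherm, hx]

-- `∑ i, xᵢ • Aᵢ` is a hermitian involution whose expectation `∑ i, xᵢ²` in `Ψ` equals `‖Ψ‖² = 1`,
-- so it fixes `Ψ`.
theorem spinProjection_mulVec_self [DecidableEq n] {ι : Type*} [Fintype ι]
    {A : ι → Matrix n n 𝕜} (hAherm : ∀ i, (A i)ᴴ = A i) (hA2 : ∀ i, A i * A i = 1)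
    (hanti : ∀ i j, i ≠ j → A i * A j + A j * A i = 0) {Ψ : n → 𝕜} (hΨ : star Ψ ⬝ᵥ Ψ = 1)
    (hx : ∑ i, (star Ψ ⬝ᵥ (A i *ᵥ Ψ)) ^ 2 = 1) :
    spinProjection A (fun i => star Ψ ⬝ᵥ (A i *ᵥ Ψ)) *ᵥ Ψ = Ψ := by
  set x := fun i => star Ψ ⬝ᵥ (A i *ᵥ Ψ)
  have hx_real : ∀ i, star (x i) = x i := fun i => by
    rw [star_dotProduct_mulVec_self, hAherm]
  set m := ∑ i, x i • A i with hm
  have hm_herm : mᴴ = m := by simp [hm, conjTranspose_sum, conjTranspose_smul, hAherm, hx_real]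
  have hmΨ : m *ᵥ Ψ = Ψ := by
    refine mulVec_eq_self_of_dotProduct_mulVec_eq hm_herm ?_ ?_
    · rw [sum_smul_mul_self hA2 hanti, hx, one_smul]
    · simp only [hm, sum_mulVec, smul_mulVec, dotProduct_sum, dotProduct_smul, smul_eq_mul, hΨ,
        ← hx, sq, x]
  rw [spinProjection, smul_mulVec, add_mulVec, one_mulVec, hmΨ, ← two_smul 𝕜, smul_smul,
    inv_mul_cancel₀ two_ne_zero, one_smul]

theorem dotProduct_mul_mulVec_eq_smul {P X Y : Matrix n n 𝕜} {Ψ : n → 𝕜} {c : 𝕜}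
    (hP : Pᴴ = P) (hPΨ : P *ᵥ Ψ = Ψ) (hX : P * X * P = c • P) (hY : Commute P Y) :
    star Ψ ⬝ᵥ ((X * Y) *ᵥ Ψ) = c * (star Ψ ⬝ᵥ (Y *ᵥ Ψ)) := by
  have hΨP : star Ψ ᵥ* P = star Ψ := by rw [← hP, ← star_mulVec, hPΨ]
  calc star Ψ ⬝ᵥ ((X * Y) *ᵥ Ψ) = (star Ψ ᵥ* P) ⬝ᵥ ((X * (Y * P)) *ᵥ Ψ) := by
        rw [hΨP, ← mul_assoc, ← mulVec_mulVec Ψ (X * Y) P, hPΨ]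
    _ = star Ψ ⬝ᵥ ((P * X * P * Y) *ᵥ Ψ) := by
        rw [← dotProduct_mulVec, mulVec_mulVec, ← hY.eq]
        simp only [mul_assoc]
    _ = c * (star Ψ ⬝ᵥ (Y *ᵥ Ψ)) := by
        rw [hX, smul_mul_assoc, smul_mulVec, dotProduct_smul, smul_eq_mul, ← mulVec_mulVec,
          dotProduct_mulVec, hΨP]

theorem dotProduct_mul_mulVec_eq_mul [DecidableEq n] {P X Y : Matrix n n 𝕜} {Ψ : n → 𝕜} {c : 𝕜}
    (hΨ : star Ψ ⬝ᵥ Ψ = 1) (hP : Pᴴ = P) (hPΨ : P *ᵥ Ψ = Ψ) (hX : P * X * P = c • P)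
    (hY : Commute P Y) :
    star Ψ ⬝ᵥ ((X * Y) *ᵥ Ψ) = star Ψ ⬝ᵥ (X *ᵥ Ψ) * star Ψ ⬝ᵥ (Y *ᵥ Ψ) := by
  have hc : star Ψ ⬝ᵥ (X *ᵥ Ψ) = c := by
    simpa [hΨ] using dotProduct_mul_mulVec_eq_smul hP hPΨ hX (Commute.one_right P)
  rw [hc]
  exact dotProduct_mul_mulVec_eq_smul hP hPΨ hX hY

end VectorState

theorem Matrix.exists_eq_smul_one_of_forall_commute {n K : Type*} [Fintype n] [DecidableEq n]
    [CommSemiring K] {s : Set (Matrix n n K)} (hs : Algebra.adjoin K s = ⊤) {T : Matrix n n K}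
    (hT : ∀ X ∈ s, Commute T X) : ∃ γ : K, T = γ • 1 := by
  have hT_center : T ∈ Set.center (Matrix n n K) := Semigroup.mem_center_iff.mpr fun X =>
    (Algebra.commute_of_mem_adjoin_of_forall_mem_commute (hs ▸ Algebra.mem_top) hT).symm.eq
  rw [Matrix.center_eq_range] at hT_center
  obtain ⟨γ, rfl⟩ := hT_center
  exact ⟨γ, by rw [scalar_apply, smul_one_eq_diagonal]⟩

theorem exists_mul_mul_eq_smul_of_mem_span {K R : Type*} [CommSemiring K] [Semiring R]
    [Algebra K R] {s : Set R} {P : R} (hs : ∀ X ∈ s, ∃ c : K, P * X * P = c • P) {X : R}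
    (hX : X ∈ Submodule.span K s) : ∃ c : K, P * X * P = c • P := by
  induction hX using Submodule.span_induction with
  | mem X hX => exact hs X hX
  | zero => exact ⟨0, by simp⟩
  | add X Y _ _ hX hY =>
    obtain ⟨a, ha⟩ := hX
    obtain ⟨b, hb⟩ := hY
    exact ⟨a + b, by rw [mul_add, add_mul, ha, hb, add_smul]⟩
  | smul t X _ hX =>
    obtain ⟨a, ha⟩ := hX
    exact ⟨t * a, by rw [mul_smul_comm, smul_mul_assoc, ha, smul_smul]⟩

section ThreeGenerators

variable {K R : Type*} [Field K] [Ring R] [Algebra K R] {A : Fin 3 → R}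

theorem commute_mul_of_anticommute {a b c : R} (hab : a * b + b * a = 0)
    (hac : a * c + c * a = 0) : Commute a (b * c) := calc
  a * (b * c) = -(b * (a * c)) := by
    rw [← mul_assoc, eq_neg_of_add_eq_zero_left hab, neg_mul, mul_assoc]
  _ = b * c * a := by rw [eq_neg_of_add_eq_zero_left hac, mul_neg, neg_neg, mul_assoc]

theorem commute_mul_mul_of_anticommute (hanti : ∀ i j, i ≠ j → A i * A j + A j * A i = 0)
    (i : Fin 3) : Commute (A 0 * A 1 * A 2) (A i) := by
  fin_cases i
  · rw [mul_assoc]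
    exact (Commute.refl _).mul_left (commute_mul_of_anticommute (hanti 0 1 (by decide))
      (hanti 0 2 (by decide))).symm
  · rw [eq_neg_of_add_eq_zero_left (hanti 0 1 (by decide)), neg_mul, mul_assoc]
    exact ((Commute.refl _).mul_left (commute_mul_of_anticommute (hanti 1 0 (by decide))
      (hanti 1 2 (by decide))).symm).neg_left
  · exact (commute_mul_of_anticommute (hanti 2 0 (by decide))
      (hanti 2 1 (by decide))).symm.mul_left (Commute.refl _)

theorem mul_mem_span_of_mul_mul_eq_smul_one (hA2 : ∀ i, A i * A i = 1)
    (hanti : ∀ i j, i ≠ j → A i * A j + A j * A i = 0) {γ : K}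
    (hγ : A 0 * A 1 * A 2 = γ • 1) (i j : Fin 3) :
    A i * A j ∈ Submodule.span K (insert 1 (Set.range A)) := by
  set S := Submodule.span K (insert 1 (Set.range A))
  have hA : ∀ k, A k ∈ S := fun k => Submodule.subset_span (Set.mem_insert_of_mem _ ⟨k, rfl⟩)
  have hlt : ∀ i j : Fin 3, i < j → A i * A j ∈ S := by
    intro i j hij
    fin_cases i <;> fin_cases j <;> try exact absurd hij (by decide)
    · have : A 0 * A 1 = γ • A 2 := by
        rw [← smul_one_mul, ← hγ, mul_assoc _ (A 2), hA2, mul_one]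
      exact this ▸ S.smul_mem γ (hA 2)
    · have : A 0 * A 2 = -(γ • A 1) := by
        rw [← smul_one_mul, ← hγ, mul_assoc, eq_neg_of_add_eq_zero_left (hanti 2 1 (by decide)),
          mul_neg, neg_neg, mul_assoc, ← mul_assoc (A 1) (A 1), hA2, one_mul]
      exact this ▸ S.neg_mem (S.smul_mem γ (hA 1))
    · have : A 1 * A 2 = γ • A 0 := by
        rw [← mul_smul_one, ← hγ, mul_assoc, ← mul_assoc (A 0) (A 0), hA2, one_mul]
      exact this ▸ S.smul_mem γ (hA 0)
  rcases lt_trichotomy i j with h | rfl | h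
  · exact hlt i j h
  · exact hA2 i ▸ Submodule.subset_span (Set.mem_insert _ _)
  · rw [eq_neg_of_add_eq_zero_left (hanti i j h.ne')]
    exact S.neg_mem (hlt j i h)

theorem mem_span_of_mem_adjoin_of_mul_mul_eq_smul_one (hA2 : ∀ i, A i * A i = 1)
    (hanti : ∀ i j, i ≠ j → A i * A j + A j * A i = 0) {γ : K}
    (hγ : A 0 * A 1 * A 2 = γ • 1) {X : R} (hX : X ∈ Algebra.adjoin K (Set.range A)) :
    X ∈ Submodule.span K (insert 1 (Set.range A)) := by
  set S := Submodule.span K (insert 1 (Set.range A))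
  have hA : ∀ k, A k ∈ S := fun k => Submodule.subset_span (Set.mem_insert_of_mem _ ⟨k, rfl⟩)
  have hmul : ∀ x y, x ∈ S → y ∈ S → x * y ∈ S := by
    intro x y hx hy
    have hxy := Submodule.mul_mem_mul hx hy
    rw [Submodule.span_mul_span] at hxy
    refine Submodule.span_le.mpr ?_ hxy
    intro z hz
    obtain ⟨a, ha, b, hb, rfl⟩ := Set.mem_mul.mp hz
    rcases ha with rfl | ⟨i, rfl⟩
    · simpa only [one_mul] using Submodule.subset_span hb
    rcases hb with rfl | ⟨j, rfl⟩
    · rw [mul_one]; exact hA i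
    · exact mul_mem_span_of_mul_mul_eq_smul_one hA2 hanti hγ i j
  refine Algebra.adjoin_le (S := S.toSubalgebra (Submodule.subset_span (Set.mem_insert _ _)) hmul)
    ?_ hX
  rintro _ ⟨i, rfl⟩
  exact hA i

end ThreeGenerators

theorem stmt_18_general (A B : Fin 3 → Matrix (Fin 4) (Fin 4) ℂ)
    (hAherm : ∀ i, (A i)ᴴ = A i)
    (hA2 : ∀ i, A i * A i = 1)
    (hcomm : ∀ i j, A i * B j = B j * A i)
    (hAanti : ∀ i j, i ≠ j → A i * A j + A j * A i = 0)
    (hgen : Algebra.adjoin ℂ {X | (∃ i, X = A i) ∨ ∃ i, X = B i} = ⊤)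
    (Ψ : Fin 4 → ℂ) (hΨ : ∑ i, ‖Ψ i‖ ^ 2 = 1)
    (hr : ∑ i, (vecState Ψ (A i)).re ^ 2 = 1) :
    ∀ X ∈ Algebra.adjoin ℂ {Y | ∃ i, Y = A i}, ∀ Y ∈ Algebra.adjoin ℂ {Y | ∃ j, Y = B j},
      vecState Ψ (X * Y) = vecState Ψ X * vecState Ψ Y := by
  intro X hX Y hY
  have hAB : ∀ i j, Commute (A i) (B j) := hcomm
  have hΨ1 : star Ψ ⬝ᵥ Ψ = 1 := by
    simp only [dotProduct, Pi.star_apply, RCLike.star_def, Complex.conj_mul']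
    exact_mod_cast hΨ
  set r := fun i => vecState Ψ (A i)
  have hr_real : ∀ i, star (r i) = r i := fun i =>
    (star_dotProduct_mulVec_self Ψ (A i)).trans (by rw [hAherm]; rfl)
  have hr_sq : ∑ i, r i ^ 2 = 1 := sum_sq_eq_one_of_sum_re_sq_eq_one hr_real hr
  obtain ⟨γ, hγ⟩ := exists_eq_smul_one_of_forall_commute hgen (T := A 0 * A 1 * A 2) (by
    rintro _ (⟨i, rfl⟩ | ⟨j, rfl⟩)
    · exact commute_mul_mul_of_anticommute hAanti i
    · exact ((hAB 0 j).mul_left (hAB 1 j)).mul_left (hAB 2 j))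
  have hA_range : {Y | ∃ i, Y = A i} = Set.range A := by ext; simp [eq_comm]
  obtain ⟨c, hc⟩ : ∃ c : ℂ, spinProjection A r * X * spinProjection A r = c • spinProjection A r := by
    refine exists_mul_mul_eq_smul_of_mem_span ?_
      (mem_span_of_mem_adjoin_of_mul_mul_eq_smul_one hA2 hAanti hγ (hA_range ▸ hX))
    rintro _ (rfl | ⟨i, rfl⟩)
    · exact ⟨1, by rw [mul_one, spinProjection_mul_self hA2 hAanti hr_sq, one_smul]⟩
    · exact ⟨_, spinProjection_mul_mul_spinProjection hA2 hAanti hr_sq i⟩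
  have hPY : Commute (spinProjection A r) Y := commute_spinProjection r fun i =>
    Algebra.commute_of_mem_adjoin_of_forall_mem_commute hY (by rintro _ ⟨j, rfl⟩; exact hAB i j)
  exact dotProduct_mul_mulVec_eq_mul hΨ1 (spinProjection_conjTranspose hAherm hr_real)
    (spinProjection_mulVec_self hAherm hA2 hAanti hΨ1 hr_sq) hc hPY

theorem stmt_18 (A B : Fin 3 → Matrix (Fin 4) (Fin 4) ℂ)
    (hAherm : ∀ i, (A i)ᴴ = A i) (hBherm : ∀ i, (B i)ᴴ = B i)
    (hA2 : ∀ i, A i * A i = 1) (hB2 : ∀ i, B i * B i = 1)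
    (hcomm : ∀ i j, A i * B j = B j * A i)
    (hAanti : ∀ i j, i ≠ j → A i * A j + A j * A i = 0)
    (hBanti : ∀ i j, i ≠ j → B i * B j + B j * B i = 0)
    (hgen : Algebra.adjoin ℂ {X | (∃ i, X = A i) ∨ ∃ i, X = B i} = ⊤)
    (Ψ : Fin 4 → ℂ) (hΨ : ∑ i, ‖Ψ i‖ ^ 2 = 1)
    (hr : ∑ i, (vecState Ψ (A i)).re ^ 2 = 1)
    (hs : ∑ j, (vecState Ψ (B j)).re ^ 2 = 1) :
    ∀ X ∈ Algebra.adjoin ℂ {Y | ∃ i, Y = A i}, ∀ Y ∈ Algebra.adjoin ℂ {Y | ∃ j, Y = B j},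
      vecState Ψ (X * Y) = vecState Ψ X * vecState Ψ Y :=
  stmt_18_general A B hAherm hA2 hcomm hAanti hgen Ψ hΨ hr
end

section
/- For the Bell pair (𝒜, ℬ) with A₁ = ½⁻¹ᐟ²(λ₄+λ₁₁), A₂ = ½⁻¹ᐟ²(λ₁₀−λ₁₂), A₃ = −½(λ₁+λ₃−λ₁₃+λ₁₅), B₁ = ½⁻¹ᐟ²(λ₇+λ₉), B₂ = −½⁻¹ᐟ²(λ₅+λ₈), B₃ = ½(λ₁−λ₃−λ₁₃−λ₁₅), every vector Ψ_{r,φ,ϑ} = (r/√2)cos φ e₁ − (r/√2)cos φ e^{2iϑ} e₂ + r sin φ e^{iϑ} e₃ + i√(1−r²) e^{iϑ} e₄ (r ∈ [0,1], φ ∈ [0,π/2], ϑ ∈ [0,2π]) satisfies ω_{Ψ}(Aᵢ) = 0 and ω_{Ψ}(Bⱼ) = 0 for all i, j = 1,2,3. -/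
open Matrix Kronecker ComplexOrder

/-!
Up to the global phase `e^{iϑ}`, the vector `Ψ_{r,φ,ϑ}` has the shape `(u, -ū, b, i c)` with
`u = (r/√2) cos φ · e^{-iϑ}` and `b, c` real. In the computational basis each of the six generators
pairs the coordinates of such a vector so that its expectation value is a sum of terms that cancel
against their complex conjugates: it vanishes identically in `u, ū, b, c`.
-/

open ComplexConjugate

lemma kr_eq_blocks (A B : Matrix (Fin 2) (Fin 2) ℂ) :
    kr A B = !![A 0 0 * B 0 0, A 0 0 * B 0 1, A 0 1 * B 0 0, A 0 1 * B 0 1;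
                A 0 0 * B 1 0, A 0 0 * B 1 1, A 0 1 * B 1 0, A 0 1 * B 1 1;
                A 1 0 * B 0 0, A 1 0 * B 0 1, A 1 1 * B 0 0, A 1 1 * B 0 1;
                A 1 0 * B 1 0, A 1 0 * B 1 1, A 1 1 * B 1 0, A 1 1 * B 1 1] := by
  ext i j
  fin_cases i <;> fin_cases j <;> rfl

lemma vecState_smul_left (z : ℂ) (Ψ : Fin 4 → ℂ) (X : Matrix (Fin 4) (Fin 4) ℂ) :
    vecState (z • Ψ) X = conj z * z * vecState Ψ X := by
  simp only [vecState, star_smul, mulVec_smul, dotProduct_smul, smul_dotProduct, smul_eq_mul,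
    RCLike.star_def]
  ring

noncomputable def conjPairState (u : ℂ) (b c : ℝ) : Fin 4 → ℂ := ![u, -conj u, b, Complex.I * c]

lemma eq_smul_conjPairState (a b c : ℝ) {E : ℂ} (hE : E * conj E = 1) :
    ![(a : ℂ), -(a : ℂ) * E ^ 2, (b : ℂ) * E, Complex.I * (c : ℂ) * E] =
      E • conjPairState (a * conj E) b c := by
  ext k
  fin_cases k <;>
  simp only [conjPairState, Pi.smul_apply, smul_eq_mul, Fin.isValue, Fin.zero_eta, Fin.mk_one,
    Fin.reduceFinMk, cons_val, cons_val_zero, cons_val_one, map_mul, Complex.conj_ofReal,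
    Complex.conj_conj]
  · linear_combination (-a : ℂ) * hE
  all_goals ring

lemma vecState_conjPairState_An (u : ℂ) (b c : ℝ) (i : Fin 3) :
    vecState (conjPairState u b c) (An i) = 0 := by
  fin_cases i <;>
  simp only [An, lam, kr_eq_blocks, σp, one_fin_two, vecState, conjPairState, mulVec, dotProduct,
    Fin.sum_univ_four, Pi.star_apply, Matrix.smul_apply, Matrix.add_apply, Matrix.sub_apply,
    Matrix.neg_apply, of_apply, cons_val', cons_val_zero, cons_val_one, cons_val, cons_val_fin_one,
    smul_eq_mul, Fin.isValue, RCLike.star_def, map_mul, map_neg, Complex.conj_ofReal,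
    Complex.conj_I, Complex.conj_conj] <;>
  grind [Complex.I_sq]

lemma vecState_conjPairState_Bn (u : ℂ) (b c : ℝ) (j : Fin 3) :
    vecState (conjPairState u b c) (Bn j) = 0 := by
  fin_cases j <;>
  simp only [Bn, lam, kr_eq_blocks, σp, one_fin_two, vecState, conjPairState, mulVec, dotProduct,
    Fin.sum_univ_four, Pi.star_apply, Matrix.smul_apply, Matrix.add_apply, Matrix.sub_apply,
    of_apply, cons_val', cons_val_zero, cons_val_one, cons_val, cons_val_fin_one,
    smul_eq_mul, Fin.isValue, RCLike.star_def, map_mul, map_neg, Complex.conj_ofReal,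
    Complex.conj_I, Complex.conj_conj] <;>
  grind [Complex.I_sq]

theorem stmt_19_general (r φ ϑ : ℝ)
    (Ψ : Fin 4 → ℂ)
    (hΨ : Ψ = ![((r / Real.sqrt 2 * Real.cos φ : ℝ) : ℂ),
        -((r / Real.sqrt 2 * Real.cos φ : ℝ) : ℂ) * Complex.exp (2 * Complex.I * ϑ),
        ((r * Real.sin φ : ℝ) : ℂ) * Complex.exp (Complex.I * ϑ),
        Complex.I * ((Real.sqrt (1 - r ^ 2) : ℝ) : ℂ) * Complex.exp (Complex.I * ϑ)]) :
    (∀ i, vecState Ψ (An i) = 0) ∧ (∀ j, vecState Ψ (Bn j) = 0) := by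
  set E := Complex.exp (Complex.I * ϑ)
  have hE : E * conj E = 1 := by
    rw [← Complex.exp_conj, ← Complex.exp_add]
    simp
  have hE2 : Complex.exp (2 * Complex.I * ϑ) = E ^ 2 := by
    rw [← Complex.exp_nat_mul]
    ring_nf
  rw [hE2, eq_smul_conjPairState _ _ _ hE] at hΨ
  subst hΨ
  exact ⟨fun i => by rw [vecState_smul_left, vecState_conjPairState_An, mul_zero],
    fun j => by rw [vecState_smul_left, vecState_conjPairState_Bn, mul_zero]⟩

theorem stmt_19 (r φ ϑ : ℝ) (hr : r ∈ Set.Icc (0:ℝ) 1)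
    (hφ : φ ∈ Set.Icc (0:ℝ) (Real.pi / 2)) (hϑ : ϑ ∈ Set.Icc (0:ℝ) (2 * Real.pi))
    (Ψ : Fin 4 → ℂ)
    (hΨ : Ψ = ![((r / Real.sqrt 2 * Real.cos φ : ℝ) : ℂ),
        -((r / Real.sqrt 2 * Real.cos φ : ℝ) : ℂ) * Complex.exp (2 * Complex.I * ϑ),
        ((r * Real.sin φ : ℝ) : ℂ) * Complex.exp (Complex.I * ϑ),
        Complex.I * ((Real.sqrt (1 - r ^ 2) : ℝ) : ℂ) * Complex.exp (Complex.I * ϑ)]) :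
    (∀ i, vecState Ψ (An i) = 0) ∧ (∀ j, vecState Ψ (Bn j) = 0) :=
  stmt_19_general r φ ϑ Ψ hΨ
end
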